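/- Let k be an algebraically closed field of characteristic ≠ 2, with i a square root of −1. The subgroup of PGL(2,k) generated by the classes of [[1,0],[0,-1]], [[0,1],[1,0]], and [[1,i],[1,-i]] is isomorphic to the alternating group A₄ of order 12. -/

import Mathlib

/-!
The three matrices act on `P¹(k) = k ∪ {∞}` as `x ↦ -x`, `x ↦ 1/x` and `x ↦ (x + i)/(x - i)`.
Take a fixed point `v` of the third map, i.e. a root of `v² = (1 + i) v + i` (here we use that `k`
is algebraically closed). The orbit `v, -v, 1/v, -1/v` of `v` under the Klein four-group
generated by the first two maps has four distinct points, and the three generators permute it as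
the even permutations `(0 1)(2 3)`, `(0 2)(1 3)` and `(1 2 3)`, which generate `A₄`. An element of
`PGL(2,k)` fixing three points of `P¹` is trivial, so this permutation representation of the
generated group is faithful, with image `A₄`.
-/

open scoped LinearAlgebra.Projectivization
open Matrix Projectivization

noncomputable section

/-- The projective general linear group `PGL(2,k)`: `GL(2,k)` modulo its center. -/
abbrev PGL2 (k : Type) [Field k] : Type := GL (Fin 2) k ⧸ Subgroup.center (GL (Fin 2) k)

variable {k : Type} [Field k]

open scoped Classical in
/-- The class in `PGL(2,k)` of a nonsingular 2×2 matrix (junk value `1` if singular). -/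
def pgl (M : Matrix (Fin 2) (Fin 2) k) : PGL2 k :=
  if h : M.det ≠ 0 then QuotientGroup.mk (Matrix.GeneralLinearGroup.mkOfDetNeZero M h)
  else 1

/-- The projective line `P¹(k)`. -/
abbrev P1 (k : Type) [Field k] := ℙ k (Fin 2 → k)

/-- The linear automorphism of `k²` given by a matrix in `GL(2,k)`. -/
def glLinEquiv (g : GL (Fin 2) k) : (Fin 2 → k) ≃ₗ[k] (Fin 2 → k) :=
  LinearMap.GeneralLinearGroup.generalLinearEquiv k (Fin 2 → k)
    (Matrix.GeneralLinearGroup.toLin g)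

lemma glLinEquiv_apply (g : GL (Fin 2) k) (v : Fin 2 → k) :
    glLinEquiv g v = Matrix.mulVecLin g.val v := rfl

/-- `GL(2,k)` acts on `P¹(k)` by fractional linear transformations. -/
instance glAction : MulAction (GL (Fin 2) k) (P1 k) where
  smul g x := x.map (glLinEquiv g).toLinearMap (glLinEquiv g).injective
  one_smul x := by
    show Projectivization.map _ _ x = x
    have h1 : glLinEquiv (1 : GL (Fin 2) k) = LinearEquiv.refl k _ := by
      simp only [glLinEquiv, _root_.map_one]; rfl
    induction' x using Projectivization.ind with v hv
    rw [Projectivization.map_mk]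
    simp [h1]
  mul_smul g h x := by
    show Projectivization.map _ _ x =
      Projectivization.map _ _ (Projectivization.map _ _ x)
    have hgh : glLinEquiv (g * h) = (glLinEquiv h).trans (glLinEquiv g) := by
      simp only [glLinEquiv, _root_.map_mul]; rfl
    induction' x using Projectivization.ind with v hv
    simp only [Projectivization.map_mk, hgh]
    rfl

lemma gl_smul_mk (g : GL (Fin 2) k) (v : Fin 2 → k) (hv : v ≠ 0) :
    g • Projectivization.mk k v hv =
      Projectivization.mk k (glLinEquiv g v) ((glLinEquiv g).map_ne_zero_iff.mpr hv) :=
  rfl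

/-- Central (i.e. scalar) matrices act trivially on `P¹(k)`. -/
lemma central_smul_triv (c : GL (Fin 2) k) (hc : c ∈ Subgroup.center (GL (Fin 2) k))
    (x : P1 k) : c • x = x := by
  obtain ⟨r, hr⟩ : c.val ∈ Set.range (Matrix.scalar (Fin 2)) := by
    refine Matrix.mem_range_scalar_of_commute_transvectionStruct (fun t => ?_)
    have htGL : (Matrix.GeneralLinearGroup.mkOfDetNeZero t.toMatrix
        (by rw [t.det]; exact one_ne_zero) : GL (Fin 2) k) * c =
        c * Matrix.GeneralLinearGroup.mkOfDetNeZero t.toMatrix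
        (by rw [t.det]; exact one_ne_zero) :=
      (Subgroup.mem_center_iff.mp hc) _
    exact congrArg Units.val htGL
  have hr0 : r ≠ 0 := by
    rintro rfl
    have hu : IsUnit c.val.det := (Matrix.isUnit_iff_isUnit_det _).mp c.isUnit
    rw [← hr] at hu
    simp at hu
  induction' x using Projectivization.ind with v hv
  rw [gl_smul_mk]
  apply (Projectivization.mk_eq_mk_iff' k _ _ _ hv).mpr
  refine ⟨r, ?_⟩
  rw [glLinEquiv_apply, ← hr]
  funext j
  simp [Matrix.mulVec_diagonal]

/-- The action of `GL(2,k)` on `P¹(k)` descends to `PGL(2,k)`. -/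
instance pglAction : MulAction (PGL2 k) (P1 k) where
  smul g x := Quotient.liftOn' g (fun A => A • x) (by
    intro a b hab
    rw [QuotientGroup.leftRel_apply] at hab
    have : b = a * (a⁻¹ * b) := by group
    show a • x = b • x
    rw [this, SemigroupAction.mul_smul, central_smul_triv _ hab])
  one_smul x := by
    show (1 : GL (Fin 2) k) • x = x
    exact MulAction.one_smul x
  mul_smul a b x := by
    refine Quotient.inductionOn₂' a b (fun A B => ?_)
    show (A * B) • x = A • (B • x)
    exact SemigroupAction.mul_smul A B x

/-- The point `(a : 1)` of `P¹(k)`. -/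
def pt (a : k) : P1 k := Projectivization.mk k ![a, 1] (by
  intro h; simpa using congrFun h 1)

/-- The point at infinity `(1 : 0)` of `P¹(k)`. -/
def inftyPt : P1 k := Projectivization.mk k ![1, 0] (by
  intro h; simpa using congrFun h 0)


open scoped Pointwise

theorem LinearMap.eq_smul_id_of_three_eigenvectors {K V : Type*} [Field K] [AddCommGroup V]
    [Module K V] (hV : Module.finrank K V = 2) (f : V →ₗ[K] V) {u v w : V} {a b c : K}
    (huv : LinearIndependent K ![u, v]) (huw : LinearIndependent K ![u, w])
    (hvw : LinearIndependent K ![v, w])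
    (hu : f u = a • u) (hv : f v = b • v) (hw : f w = c • w) : f = a • LinearMap.id := by
  have hspan : Submodule.span K {u, v} = ⊤ := by
    simpa [Matrix.range_cons, Matrix.range_empty, Set.union_singleton, Set.pair_comm] using
      huv.span_eq_top_of_card_eq_finrank (by simp [hV])
  obtain ⟨α, β, rfl⟩ := Submodule.mem_span_pair.mp (hspan ▸ Submodule.mem_top (x := w))
  have hα : α ≠ 0 := by
    rintro rfl
    simpa using (LinearIndependent.pair_iff.mp hvw) β (-1) (by simp)
  have hβ : β ≠ 0 := by
    rintro rfl
    simpa using (LinearIndependent.pair_iff.mp huw) α (-1) (by simp)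
  have hab : α * (a - c) = 0 ∧ β * (b - c) = 0 := by
    refine LinearIndependent.pair_iff.mp huv _ _ ?_
    simp only [map_add, map_smul, hu, hv, smul_add, smul_smul] at hw
    linear_combination (norm := module) hw
  have hac : a = c := sub_eq_zero.mp ((mul_eq_zero.mp hab.1).resolve_left hα)
  have hbc : b = c := sub_eq_zero.mp ((mul_eq_zero.mp hab.2).resolve_left hβ)
  refine LinearMap.ext fun x => ?_
  obtain ⟨s, t, rfl⟩ := Submodule.mem_span_pair.mp (hspan ▸ Submodule.mem_top (x := x))
  simp [hu, hv, hac, hbc, smul_smul, mul_comm]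

theorem Projectivization.linearIndependent_rep_pair {K V : Type*} [DivisionRing K]
    [AddCommGroup V] [Module K V] {p q : ℙ K V} (h : p ≠ q) :
    LinearIndependent K ![p.rep, q.rep] := by
  convert independent_iff.mp ((independent_pair_iff_ne p q).mpr h) using 1
  ext i
  fin_cases i <;> rfl

theorem IsAlgClosed.exists_sq_eq_mul_add {K : Type*} [Field K] [IsAlgClosed K] (b c : K) :
    ∃ v : K, v ^ 2 = b * v + c := by
  open Polynomial in
  obtain ⟨v, hv⟩ := IsAlgClosed.exists_root (X ^ 2 - C b * X - C c : K[X])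
    (ne_of_eq_of_ne (b := (2 : WithBot ℕ)) (by compute_degree!) (by decide))
  exact ⟨v, by simpa [sub_eq_zero, sub_sub] using hv⟩

section PermOfStabilizerRange

open MulAction Equiv

variable {G X ι : Type*} [Group G] [MulAction G X] {p : ι → X}

def permOfStabilizerRange (hp : Function.Injective p) : stabilizer G (Set.range p) →* Perm ι :=
  (Equiv.ofInjective p hp).symm.permCongrHom.toMonoidHom.comp (toPermHom _ _)

lemma apply_permOfStabilizerRange (hp : Function.Injective p) (g : stabilizer G (Set.range p))
    (j : ι) : p (permOfStabilizerRange hp g j) = (g : G) • p j := by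
  simp [permOfStabilizerRange, Equiv.permCongrHom, apply_ofInjective_symm]

lemma permOfStabilizerRange_injective (hp : Function.Injective p)
    (hfix : ∀ g : G, (∀ j, g • p j = p j) → g = 1) :
    Function.Injective (permOfStabilizerRange (G := G) hp) := by
  refine (injective_iff_map_eq_one _).mpr fun g hg => Subtype.ext (hfix g fun j => ?_)
  rw [← apply_permOfStabilizerRange hp, hg, Perm.one_apply]

lemma mem_stabilizer_range_of_smul_eq {g : G} (σ : Perm ι) (hg : ∀ j, g • p j = p (σ j)) :
    g ∈ stabilizer G (Set.range p) := by
  rw [mem_stabilizer_iff, ← Set.range_smul, funext hg]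
  exact σ.surjective.range_comp p

lemma permOfStabilizerRange_mk (hp : Function.Injective p) {g : G} (σ : Perm ι)
    (hg : ∀ j, g • p j = p (σ j)) :
    permOfStabilizerRange hp ⟨g, mem_stabilizer_range_of_smul_eq σ hg⟩ = σ :=
  Equiv.ext fun j => hp (by rw [apply_permOfStabilizerRange hp, hg])

end PermOfStabilizerRange

def Subgroup.closureImageEquivOfInjective {H G P : Type*} [Group H] [Group G]
    [Group P] {f : H →* G} (hf : Function.Injective f) {ψ : H →* P} (hψ : Function.Injective ψ)
    (s : Set H) : Subgroup.closure (f '' s) ≃* Subgroup.closure (ψ '' s) :=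
  (MulEquiv.subgroupCongr (MonoidHom.map_closure f s)).symm.trans <|
    (Subgroup.equivMapOfInjective _ f hf).symm.trans <|
      (Subgroup.equivMapOfInjective _ ψ hψ).trans
        (MulEquiv.subgroupCongr (MonoidHom.map_closure ψ s))

lemma gl_smul_eq_self_iff {A : GL (Fin 2) k} {p : P1 k} :
    A • p = p ↔ ∃ a : k, glLinEquiv A p.rep = a • p.rep := by
  have h := gl_smul_mk A p.rep p.rep_nonzero
  rw [mk_rep] at h
  conv_lhs => rw [h]; rhs; rw [← p.mk_rep]
  rw [mk_eq_mk_iff']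
  simp only [eq_comm]

theorem PGL2.eq_one_of_smul_eq_self {g : PGL2 k} {p q r : P1 k} (hpq : p ≠ q) (hpr : p ≠ r)
    (hqr : q ≠ r) (hp : g • p = p) (hq : g • q = q) (hr : g • r = r) : g = 1 := by
  obtain ⟨A, rfl⟩ := QuotientGroup.mk_surjective g
  obtain ⟨a, ha⟩ := gl_smul_eq_self_iff.mp hp
  obtain ⟨b, hb⟩ := gl_smul_eq_self_iff.mp hq
  obtain ⟨c, hc⟩ := gl_smul_eq_self_iff.mp hr
  have hA := LinearMap.eq_smul_id_of_three_eigenvectors (Module.finrank_fin_fun k)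
    (glLinEquiv A).toLinearMap (linearIndependent_rep_pair hpq) (linearIndependent_rep_pair hpr)
    (linearIndependent_rep_pair hqr) ha hb hc
  have hval : A.val = Matrix.scalar (Fin 2) a := by
    apply Matrix.toLin'.injective
    refine LinearMap.ext fun v => ?_
    have hv : A.val *ᵥ v = a • v := LinearMap.congr_fun hA v
    rw [Matrix.toLin'_apply, Matrix.toLin'_apply, hv, Matrix.scalar_apply]
    ext i
    simp [Matrix.mulVec_diagonal]
  rw [QuotientGroup.eq_one_iff, Matrix.GeneralLinearGroup.mem_center_iff_val_mem_range_scalar]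
  exact ⟨a, hval.symm⟩

lemma pt_injective : Function.Injective (pt : k → P1 k) := by
  intro a b h
  obtain ⟨t, ht⟩ := (mk_eq_mk_iff' k _ _ _ _).mp h
  have h0 := congrFun ht 0
  have h1 := congrFun ht 1
  simp only [Pi.smul_apply, Matrix.cons_val_zero, Matrix.cons_val_one, smul_eq_mul,
    mul_one] at h0 h1
  rw [← h0, h1, one_mul]

lemma pgl_smul_pt {a b c d x : k} (hdet : a * d - b * c ≠ 0) (hx : c * x + d ≠ 0) :
    pgl !![a, b; c, d] • pt x = pt ((a * x + b) / (c * x + d)) := by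
  have hM : (!![a, b; c, d]).det ≠ 0 := by rwa [Matrix.det_fin_two_of]
  rw [pgl, dif_pos hM]
  refine (gl_smul_mk _ _ _).trans ((mk_eq_mk_iff' k _ _ _ _).mpr ⟨c * x + d, ?_⟩)
  ext j
  fin_cases j <;> simp [glLinEquiv_apply, Matrix.mulVec, dotProduct, Fin.sum_univ_two]
  field_simp

lemma ne_zero_and_sq_ne_one_and_sq_ne_neg_one (h2 : (2 : k) ≠ 0) {i v : k} (hi : i ^ 2 = -1)
    (hv : v ^ 2 = (1 + i) * v + i) : v ≠ 0 ∧ v ^ 2 ≠ 1 ∧ v ^ 2 ≠ -1 := by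
  have hone : (1 : k) ≠ -1 := fun h => h2 (by linear_combination h)
  refine ⟨?_, fun h1 => ?_, fun hm1 => ?_⟩
  · rintro rfl
    have : i = 0 := by linear_combination -hv
    simp [this] at hi
  · have hvi : v + i = 0 := by
      have : 2 * (v + i) = 0 := by linear_combination (1 - i) * (h1 - hv) + (v + 1) * hi
      exact (mul_eq_zero.mp this).resolve_left h2
    exact hone (by linear_combination -h1 + (v - i) * hvi + hi)
  · have hi1 : 1 + i ≠ 0 := fun h => hone (by linear_combination hi - (i - 1) * h)
    have hv1 : v + 1 = 0 := by
      have : (1 + i) * (v + 1) = 0 := by linear_combination hm1 - hv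
      exact (mul_eq_zero.mp this).resolve_left hi1
    exact hone (by linear_combination hm1 - (v - 1) * hv1)

section Tetrahedron

open Equiv

def permA : Perm (Fin 4) := swap 0 1 * swap 2 3
def permB : Perm (Fin 4) := swap 0 2 * swap 1 3
def permC : Perm (Fin 4) := swap 1 3 * swap 1 2

theorem closure_permA_permB_permC :
    Subgroup.closure {permA, permB, permC} = alternatingGroup (Fin 4) := by
  refine le_antisymm ((Subgroup.closure_le _).mpr ?_) fun τ hτ => ?_
  · simp only [Set.insert_subset_iff, Set.singleton_subset_iff, SetLike.mem_coe,
      Perm.mem_alternatingGroup]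
    decide
  · obtain ⟨m, n, l, rfl⟩ : ∃ m n : Fin 2, ∃ l : Fin 3,
        τ = permA ^ (m : ℕ) * permB ^ (n : ℕ) * permC ^ (l : ℕ) := by
      rw [Perm.mem_alternatingGroup] at hτ
      revert τ
      decide
    have mem : ∀ σ ∈ ({permA, permB, permC} : Set (Perm (Fin 4))),
        σ ∈ Subgroup.closure {permA, permB, permC} := fun _ hσ => Subgroup.subset_closure hσ
    exact mul_mem (mul_mem (pow_mem (mem _ (by simp)) _) (pow_mem (mem _ (by simp)) _))
      (pow_mem (mem _ (by simp)) _)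

def kleinOrbit (v : k) : Fin 4 → P1 k := pt ∘ ![v, -v, v⁻¹, -v⁻¹]

lemma kleinOrbit_injective (h2 : (2 : k) ≠ 0) {v : k} (hv0 : v ≠ 0) (h1 : v ^ 2 ≠ 1)
    (hm1 : v ^ 2 ≠ -1) : Function.Injective (kleinOrbit v) := by
  refine pt_injective.comp fun a b h => ?_
  fin_cases a <;> fin_cases b <;> simp at h ⊢
  all_goals
    field_simp at h
    first
      | exact mul_ne_zero h2 hv0 (by linear_combination h)
      | exact mul_ne_zero h2 hv0 (by linear_combination -h)
      | exact h1 (by linear_combination h)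
      | exact h1 (by linear_combination -h)
      | exact hm1 (by linear_combination h)
      | exact hm1 (by linear_combination -h)
      | exact h2 (by linear_combination h)
      | exact h2 (by linear_combination -h)

lemma pgl_smul_kleinOrbit_A {v : k} (j : Fin 4) :
    pgl !![(1:k), 0; 0, -1] • kleinOrbit v j = kleinOrbit v (permA j) := by
  fin_cases j <;> simp [kleinOrbit, permA, swap_apply_def, pgl_smul_pt, div_neg]

lemma pgl_smul_kleinOrbit_B {v : k} (hv0 : v ≠ 0) (j : Fin 4) :
    pgl !![(0:k), 1; 1, 0] • kleinOrbit v j = kleinOrbit v (permB j) := by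
  fin_cases j <;> simp [kleinOrbit, permB, swap_apply_def, pgl_smul_pt, hv0]

lemma pgl_smul_kleinOrbit_C (h2 : (2 : k) ≠ 0) {i v : k} (hi : i ^ 2 = -1)
    (hv : v ^ 2 = (1 + i) * v + i) (hv0 : v ≠ 0) (hm1 : v ^ 2 ≠ -1) (j : Fin 4) :
    pgl !![(1:k), i; 1, -i] • kleinOrbit v j = kleinOrbit v (permC j) := by
  have hdet : 1 * -i - i * 1 ≠ 0 := by
    intro h
    have : i = 0 := by simpa [h2] using (show 2 * i = 0 by linear_combination -h)
    simp [this] at hi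
  have hden : ∀ x : k, x ^ 2 ≠ -1 → 1 * x + -i ≠ 0 := fun x hx h =>
    hx ((by linear_combination h : x = i) ▸ hi)
  have hinv : v⁻¹ ^ 2 ≠ -1 := by
    rw [inv_pow]
    intro h
    exact hm1 (by rw [← inv_inv (v ^ 2), h, inv_neg, inv_one])
  have hfix : ∀ x y : k, x ^ 2 ≠ -1 → x + i = y * (x - i) →
      pgl !![(1:k), i; 1, -i] • pt x = pt y := fun x y hx hxy => by
    rw [pgl_smul_pt hdet (hden x hx)]
    congr 1
    rw [div_eq_iff (hden x hx)]
    linear_combination hxy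
  fin_cases j
  · exact hfix v v hm1 (by linear_combination -hv)
  · exact hfix (-v) v⁻¹ (by rwa [neg_sq]) (by field_simp; linear_combination -hv)
  · exact hfix v⁻¹ (-v⁻¹) hinv (by field_simp; linear_combination i * hv + (1 + v) * hi)
  · exact hfix (-v⁻¹) (-v) (by rwa [neg_sq])
      (by field_simp; linear_combination -i * hv - (1 + v) * hi)

end Tetrahedron

/-- Let `k` be algebraically closed of characteristic ≠ 2 and `i` a square root
of `-1`. The subgroup of `PGL(2,k)` generated by the classes of `[[1,0],[0,-1]]`,
`[[0,1],[1,0]]` and `[[1,i],[1,-i]]` is isomorphic to the alternating group `A₄` of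
order 12. -/
theorem stmt_8 (k : Type) [Field k] [IsAlgClosed k] (h2 : (2 : k) ≠ 0)
    (i : k) (hi : i^2 = -1)
    (G : Subgroup (PGL2 k))
    (hG : G = Subgroup.closure
      {pgl !![(1:k), 0; 0, -1], pgl !![(0:k), 1; 1, 0], pgl !![(1:k), i; 1, -i]}) :
    Nonempty (G ≃* alternatingGroup (Fin 4)) ∧ Nat.card G = 12 := by
  obtain ⟨v, hv⟩ := IsAlgClosed.exists_sq_eq_mul_add (1 + i) i
  obtain ⟨hv0, h1, hm1⟩ := ne_zero_and_sq_ne_one_and_sq_ne_neg_one h2 hi hv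
  have hp := kleinOrbit_injective h2 hv0 h1 hm1
  have hψ : Function.Injective (permOfStabilizerRange (G := PGL2 k) hp) :=
    permOfStabilizerRange_injective hp fun g hg => PGL2.eq_one_of_smul_eq_self
      (hp.ne (by decide : (0 : Fin 4) ≠ 1)) (hp.ne (by decide : (0 : Fin 4) ≠ 2))
      (hp.ne (by decide : (1 : Fin 4) ≠ 2)) (hg 0) (hg 1) (hg 2)
  have hA := pgl_smul_kleinOrbit_A (v := v)
  have hB := pgl_smul_kleinOrbit_B hv0
  have hC := pgl_smul_kleinOrbit_C h2 hi hv hv0 hm1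
  let gens : Set (MulAction.stabilizer (PGL2 k) (Set.range (kleinOrbit v))) :=
    {⟨_, mem_stabilizer_range_of_smul_eq permA hA⟩, ⟨_, mem_stabilizer_range_of_smul_eq permB hB⟩,
     ⟨_, mem_stabilizer_range_of_smul_eq permC hC⟩}
  have hG' : G = Subgroup.closure (Subgroup.subtype _ '' gens) := by
    simp only [hG, gens, Set.image_insert_eq, Set.image_singleton, Subgroup.coe_subtype]
  have hA4 : Subgroup.closure (permOfStabilizerRange hp '' gens) = alternatingGroup (Fin 4) := by
    simp only [gens, Set.image_insert_eq, Set.image_singleton]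
    rw [permOfStabilizerRange_mk hp permA hA, permOfStabilizerRange_mk hp permB hB,
      permOfStabilizerRange_mk hp permC hC]
    exact closure_permA_permB_permC
  let e : G ≃* alternatingGroup (Fin 4) := (MulEquiv.subgroupCongr hG').trans <|
    (Subgroup.closureImageEquivOfInjective (Subgroup.subtype_injective _) hψ gens).trans
      (MulEquiv.subgroupCongr hA4)
  refine ⟨⟨e⟩, ?_⟩
  rw [Nat.card_congr e.toEquiv, Nat.card_eq_fintype_card]
  rfl
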